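/- arXiv:1701.06954 — 4 statements merged into one kernel-verified Lean document; each statement's English description precedes it below -/
import Mathlib

section
/- For a finite permutation group G on a set of size n, F_G(2) ≥ (n+1)·|G|, with equality if and only if G is transitive on the set of i-element subsets of Ω for every 0 ≤ i ≤ n. -/
open Polynomial

open scoped Classical

noncomputable section

/-- The number of cycles (including fixed points) of a permutation `g` on `Ω`. -/
def cycleCount {Ω : Type*} [Fintype Ω] (g : Equiv.Perm Ω) : ℕ :=
  Nat.card (MulAction.orbitRel.Quotient (Subgroup.zpowers g) Ω)

/-- The cycle polynomial `F_G(x) = ∑_{g ∈ G} x^{c(g)}`. -/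
def cyclePoly {Ω : Type*} [Fintype Ω] (G : Subgroup (Equiv.Perm Ω)) : Polynomial ℤ :=
  ∑ g : G, (X : Polynomial ℤ) ^ cycleCount (g : Equiv.Perm Ω)

/-!
By Burnside's lemma `F_G(2) = ∑_g 2^{c(g)}` is `|G|` times the number of orbits of `G` on
subsets of `Ω`, since a permutation fixes exactly the unions of its cycles. Taking sizes maps
these orbits onto `{0, …, n}`, so there are at least `n + 1` of them, with equality exactly when
each layer of `i`-subsets is a single orbit.
-/

open MulAction
open scoped Pointwise

section InvariantFinsets

variable {M α : Type*} [Group M] [MulAction M α] [DecidableEq α]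

lemma mem_of_mem_fixedPoints_of_mk_eq {s : Finset α} (hs : s ∈ fixedPoints M (Finset α))
    {x y : α} (hx : x ∈ s) (hxy : (⟦y⟧ : orbitRel.Quotient M α) = ⟦x⟧) : y ∈ s := by
  obtain ⟨m, rfl⟩ := Quotient.exact hxy
  rw [← hs m]
  exact Finset.smul_mem_smul_finset hx

variable [Fintype α]

/-- An invariant finset is the union of the orbits it meets. -/
def fixedPointsFinsetEquiv :
    fixedPoints M (Finset α) ≃ Finset (orbitRel.Quotient M α) where
  toFun s := (s : Finset α).image (⟦·⟧)
  invFun A := ⟨Finset.univ.filter (⟦·⟧ ∈ A), fun m => by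
    ext x
    rw [Finset.mem_smul_finset]
    constructor
    · rintro ⟨y, hy, rfl⟩
      simpa [orbitRel.Quotient.quotient_smul_eq] using hy
    · intro hx
      exact ⟨m⁻¹ • x, by simpa [orbitRel.Quotient.quotient_smul_eq] using hx, smul_inv_smul m x⟩⟩
  left_inv := by
    rintro ⟨s, hs⟩
    ext x
    simp only [Finset.mem_filter, Finset.mem_univ, true_and, Finset.mem_image]
    exact ⟨fun ⟨y, hy, hyx⟩ => mem_of_mem_fixedPoints_of_mk_eq hs hy hyx.symm,
      fun hx => ⟨x, hx, rfl⟩⟩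
  right_inv A := by
    ext q
    induction q using Quotient.inductionOn with | h x => ?_
    simp only [Finset.mem_image, Finset.mem_filter, Finset.mem_univ, true_and]
    exact ⟨fun ⟨y, hy, hyx⟩ => hyx ▸ hy, fun hx => ⟨x, hx, rfl⟩⟩

end InvariantFinsets

lemma fixedPoints_zpowers {G α : Type*} [Group G] [MulAction G α] (g : G) :
    fixedPoints (Subgroup.zpowers g) α = fixedBy α g := by
  ext a
  simp only [mem_fixedPoints, Subtype.forall, Subgroup.mk_smul, Subgroup.forall_mem_zpowers]
  exact mem_fixedBy_zpowers_iff_mem_fixedBy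

section OrbitsOfFinsets

variable {M α : Type*} [Group M] [MulAction M α] [Fintype α] [DecidableEq α]

variable (M α) in
def orbitFinsetCard : orbitRel.Quotient M (Finset α) → Fin (Fintype.card α + 1) :=
  Quotient.lift (fun s => ⟨s.card, Nat.lt_succ_of_le s.card_le_univ⟩) <| by
    rintro s t ⟨m, rfl⟩
    exact Fin.ext (Finset.card_smul_finset m t)

variable (M α) in
lemma orbitFinsetCard_surjective : Function.Surjective (orbitFinsetCard M α) := by
  rintro ⟨k, hk⟩
  obtain ⟨s, -, hs⟩ :=
    Finset.exists_subset_card_eq (s := (Finset.univ : Finset α)) (Nat.lt_succ_iff.mp hk)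
  exact ⟨⟦s⟧, Fin.ext hs⟩

lemma orbitFinsetCard_injective_iff : Function.Injective (orbitFinsetCard M α) ↔
    ∀ s t : Finset α, s.card = t.card → ∃ m : M, m • s = t := by
  constructor
  · intro h s t hst
    obtain ⟨m, hm⟩ := Quotient.exact (@h ⟦t⟧ ⟦s⟧ (Fin.ext hst.symm))
    exact ⟨m, hm⟩
  · intro h p q hpq
    induction p using Quotient.inductionOn with | h s => ?_
    induction q using Quotient.inductionOn with | h t => ?_
    obtain ⟨m, rfl⟩ := h t s (congrArg Fin.val hpq).symm
    exact orbitRel.Quotient.quotient_smul_eq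

variable (M α) in
lemma card_add_one_le_natCard_orbits_finset :
    Fintype.card α + 1 ≤ Nat.card (orbitRel.Quotient M (Finset α)) := by
  simpa using Nat.card_le_card_of_surjective _ (orbitFinsetCard_surjective M α)

lemma natCard_orbits_finset_eq_iff :
    Nat.card (orbitRel.Quotient M (Finset α)) = Fintype.card α + 1 ↔
      ∀ s t : Finset α, s.card = t.card → ∃ m : M, m • s = t := by
  have hsurj := orbitFinsetCard_surjective M α
  rw [← orbitFinsetCard_injective_iff]
  constructor
  · intro h
    exact ((Nat.bijective_iff_surjective_and_card _).mpr
      ⟨hsurj, h.trans (Nat.card_fin _).symm⟩).injective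
  · intro h
    exact (Nat.card_eq_of_bijective _ ⟨h, hsurj⟩).trans (Nat.card_fin _)

end OrbitsOfFinsets

lemma natCard_fixedBy_finset {Ω : Type*} [Fintype Ω] (g : Equiv.Perm Ω) :
    Nat.card (fixedBy (Finset Ω) g) = 2 ^ cycleCount g := by
  rw [← fixedPoints_zpowers, Nat.card_congr fixedPointsFinsetEquiv, Nat.card_eq_fintype_card,
    Fintype.card_finset, cycleCount, Nat.card_eq_fintype_card]

lemma cyclePoly_eval_two_eq {Ω : Type*} [Fintype Ω] (G : Subgroup (Equiv.Perm Ω)) :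
    (cyclePoly G).eval 2 = Nat.card (orbitRel.Quotient G (Finset Ω)) * Nat.card G := by
  have burnside := sum_card_fixedBy_eq_card_orbits_mul_card_group G (Finset Ω)
  simp only [← Nat.card_eq_fintype_card] at burnside
  have hsum : ∑ g : G, 2 ^ cycleCount (g : Equiv.Perm Ω) =
      Nat.card (orbitRel.Quotient G (Finset Ω)) * Nat.card G := by
    rw [← burnside]
    exact Finset.sum_congr rfl fun g _ => (natCard_fixedBy_finset (g : Equiv.Perm Ω)).symm
  rw [cyclePoly, eval_finsetSum]
  simp only [eval_pow, eval_X]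
  exact_mod_cast hsum

theorem cyclePoly_eval_two {Ω : Type*} [Fintype Ω] (G : Subgroup (Equiv.Perm Ω)) :
    ((Fintype.card Ω + 1 : ℤ) * Fintype.card G ≤ (cyclePoly G).eval 2) ∧
    ((cyclePoly G).eval 2 = (Fintype.card Ω + 1 : ℤ) * Fintype.card G ↔
      ∀ s t : Finset Ω, s.card = t.card →
        ∃ g ∈ G, s.image (g : Equiv.Perm Ω) = t) := by
  have hG : (Fintype.card G : ℤ) ≠ 0 := by positivity
  rw [cyclePoly_eval_two_eq, Nat.card_eq_fintype_card (α := G)]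
  refine ⟨by exact_mod_cast Nat.mul_le_mul_right _ (card_add_one_le_natCard_orbits_finset G Ω), ?_⟩
  rw [mul_left_inj' hG]
  norm_cast
  rw [natCard_orbits_finset_eq_iff]
  simp only [Subtype.exists, Subgroup.mk_smul, Finset.smul_finset_def, Equiv.Perm.smul_def,
    exists_prop]
end
end

section
/- Let G be a finite permutation group of degree n containing odd permutations, and let N be its index-2 subgroup of even permutations. Then for any positive integer a, 0 ≤ (-1)^n F_G(-a) < F_G(a), with equality on the left if and only if G and N have the same number of orbits on colourings of Ω with a colours. -/
open Polynomial

open scoped Classical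

noncomputable section

attribute [local instance] arrowAction


/-!
Write `c(g)` for the number of cycles of `g` and `n = |Ω|`. Since `sign g = (-1)^(n + c(g))`,
`(-1)^n F_G(-a) = ∑_{g ∈ G} sign(g) a^{c(g)} = 2 ∑_{g ∈ N} a^{c(g)} - ∑_{g ∈ G} a^{c(g)}`.
A colouring is fixed by `g` iff it is constant on the cycles of `g`, so `g` fixes `a^{c(g)}`
colourings, and Burnside's lemma turns both sums into orbit counts. With `|G| = 2|N|` this gives
`(-1)^n F_G(-a) = |G| (#N-orbits - #G-orbits)`, which is nonnegative because `N ≤ G`. The strict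
upper bound compares `F_G(a)` and `(-1)^n F_G(-a)` termwise: an odd `g` contributes
`a^{c(g)} > -a^{c(g)}`.
-/

open Equiv Equiv.Perm MulAction Subgroup

namespace Equiv.Perm

theorem orbitRel_zpowers_iff_sameCycle {α : Type*} (g : Perm α) {x y : α} :
    orbitRel (zpowers g) α x y ↔ g.SameCycle y x := by
  rw [orbitRel_apply, mem_orbit_iff, exists_zpowers]
  rfl

variable {α : Type*} [Fintype α] [DecidableEq α]

def zpowersOrbitsEquiv (g : Perm α) :
    orbitRel.Quotient (zpowers g) α ≃ Function.fixedPoints g ⊕ g.cycleFactorsFinset :=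
  .ofBijective
    (Quotient.lift
      (fun x ↦ if hx : g x = x then .inl ⟨x, hx⟩
        else .inr ⟨g.cycleOf x, cycleOf_mem_cycleFactorsFinset_iff.2 (mem_support.2 hx)⟩)
      (fun x y hxy ↦ by
        have h := (orbitRel_zpowers_iff_sameCycle g).1 hxy
        by_cases hy : g y = y
        · obtain rfl := h.eq_of_left hy
          rfl
        · have hx : ¬ g x = x := fun hx ↦ hy (h.apply_eq_self_iff.2 hx)
          simp only [dif_neg hx, dif_neg hy, h.cycleOf_eq]))
    (by
      constructor
      · refine fun p q ↦ Quotient.inductionOn₂ p q fun x y hxy ↦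
          Quotient.sound ((orbitRel_zpowers_iff_sameCycle g).2 ?_)
        simp only [Quotient.lift_mk] at hxy
        split_ifs at hxy with hx hy hy
        · cases hxy
          rfl
        · rw [sameCycle_iff_cycleOf_eq_of_mem_support (mem_support.2 hy) (mem_support.2 hx)]
          exact congrArg Subtype.val (Sum.inr_injective hxy).symm
      · rintro (⟨x, hx⟩ | ⟨c, hc⟩)
        · exact ⟨⟦x⟧, dif_pos hx⟩
        · obtain ⟨x, hx⟩ := (mem_cycleFactorsFinset_iff.1 hc).1.nonempty_support
          have hgx : g x ≠ x := mem_support.1 (mem_cycleFactorsFinset_support_le hc hx)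
          refine ⟨⟦x⟧, ?_⟩
          simp only [Quotient.lift_mk, dif_neg hgx, cycle_is_cycleOf hx hc])

theorem cycleCount_eq_card_sub_sum_cycleType_add_card (g : Perm α) :
    cycleCount g = (Fintype.card α - g.cycleType.sum) + Multiset.card g.cycleType := by
  rw [cycleCount, Nat.card_congr (zpowersOrbitsEquiv g), Nat.card_sum, Nat.card_eq_fintype_card,
    card_fixedPoints, Nat.card_eq_fintype_card, Fintype.card_coe, cycleType_def,
    Multiset.card_map]
  rfl

theorem sign_eq_neg_one_pow_card_add_cycleCount (g : Perm α) :
    sign g = (-1) ^ (Fintype.card α + cycleCount g) := by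
  obtain ⟨m, hm⟩ := Nat.exists_eq_add_of_le g.sum_cycleType_le
  rw [sign_of_cycleType, cycleCount_eq_card_sub_sum_cycleType_add_card, hm,
    Nat.add_sub_cancel_left,
    show g.cycleType.sum + m + (m + Multiset.card g.cycleType) =
      g.cycleType.sum + Multiset.card g.cycleType + 2 * m by ring, pow_add _ _ (2 * m), pow_mul]
  simp

end Equiv.Perm

section Colourings

variable {G α : Type*} [Group G] [MulAction G α] (β : Type*)

theorem mem_fixedBy_arrow_iff (g : G) {f : α → β} :
    f ∈ fixedBy (α → β) g ↔ orbitRel (zpowers g) α ≤ Setoid.ker f := by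
  refine ⟨fun hf x y ⟨⟨_, k, hk⟩, hxy⟩ ↦ ?_, fun hker ↦ funext fun x ↦ ?_⟩
  · subst hk hxy
    have := congrFun (mem_fixedBy_zpow hf (-k)) y
    change f ((g ^ (-k))⁻¹ • y) = f y at this
    rwa [zpow_neg, inv_inv] at this
  · exact hker ⟨⟨g⁻¹, inv_mem (mem_zpowers g)⟩, rfl⟩

def fixedByArrowEquiv (g : G) :
    fixedBy (α → β) g ≃ (orbitRel.Quotient (zpowers g) α → β) :=
  (Equiv.subtypeEquivRight fun _ ↦ mem_fixedBy_arrow_iff β g).trans (Setoid.liftEquiv _)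

theorem card_fixedBy_arrow [Finite α] (g : G) :
    Nat.card (fixedBy (α → β) g) = Nat.card β ^ Nat.card (orbitRel.Quotient (zpowers g) α) := by
  rw [Nat.card_congr (fixedByArrowEquiv β g), Nat.card_fun]

end Colourings

section Subgroups

variable {M : Type*} [Group M]

theorem orbitRel_le_of_le (X : Type*) [MulAction M X] {H K : Subgroup M} (hHK : H ≤ K) :
    orbitRel H X ≤ orbitRel K X :=
  fun _ _ ⟨h, hx⟩ ↦ ⟨⟨h, hHK h.2⟩, hx⟩

theorem card_orbitRel_quotient_le_of_le (X : Type*) [MulAction M X] {H K : Subgroup M}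
    (hHK : H ≤ K) [Finite (orbitRel.Quotient H X)] :
    Nat.card (orbitRel.Quotient K X) ≤ Nat.card (orbitRel.Quotient H X) :=
  Nat.card_le_card_of_surjective (Setoid.map_of_le (orbitRel_le_of_le X hHK))
    (Quotient.ind fun x ↦ ⟨⟦x⟧, rfl⟩)

def subgroupOfEquivInf (H K : Subgroup M) : H.subgroupOf K ≃ (K ⊓ H : Subgroup M) :=
  Equiv.subtypeSubtypeEquivSubtypeInter (· ∈ K) (· ∈ H)

theorem card_eq_two_mul_card_inf_ker (χ : M →* ℤˣ) {G : Subgroup M} (h : ∃ g ∈ G, χ g = -1) :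
    Nat.card G = 2 * Nat.card (G ⊓ χ.ker : Subgroup M) := by
  obtain ⟨g, hg, hχg⟩ := h
  have hmap : G.map χ = ⊤ := eq_top_iff.2 fun u _ ↦ by
    rcases Int.units_eq_one_or u with rfl | rfl
    exacts [one_mem _, ⟨g, hg, hχg⟩]
  rw [← (χ.ker.subgroupOf G).card_mul_index, ← relIndex, relIndex_ker, hmap, card_top,
    Nat.card_eq_fintype_card (α := ℤˣ), Fintype.card_units_int,
    Nat.card_congr (subgroupOfEquivInf χ.ker G), mul_comm]

theorem sum_units_mul_eq_two_mul_sum_inf_ker_sub (χ : M →* ℤˣ) (G : Subgroup M) [Fintype G]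
    [Fintype (G ⊓ χ.ker : Subgroup M)] (f : M → ℤ) :
    ∑ g : G, (χ g : ℤ) * f g = 2 * ∑ g : (G ⊓ χ.ker : Subgroup M), f g - ∑ g : G, f g := by
  have hterm : ∀ g : G, (χ g : ℤ) * f g + f g = if (g : M) ∈ χ.ker then 2 * f g else 0 := by
    intro g
    rcases Int.units_eq_one_or (χ g) with h | h
    · simp only [MonoidHom.mem_ker, h, if_true, Units.val_one]
      ring
    · simp [MonoidHom.mem_ker, h]
  rw [eq_sub_iff_add_eq, ← Finset.sum_add_distrib, Fintype.sum_congr _ _ hterm,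
    ← Finset.sum_filter, ← Finset.mul_sum, Finset.sum_subtype _ (fun _ ↦ Finset.mem_filter_univ _)]
  exact congrArg (2 * ·) <| Fintype.sum_equiv (subgroupOfEquivInf χ.ker G) _ _ fun _ ↦ rfl

theorem sum_units_mul_lt_sum {ι : Type*} [Fintype ι] (χ : ι → ℤˣ) {f : ι → ℤ}
    (hf : ∀ i, 0 < f i) (h : ∃ i, χ i = -1) : ∑ i, (χ i : ℤ) * f i < ∑ i, f i := by
  obtain ⟨i, hi⟩ := h
  refine Finset.sum_lt_sum (fun j _ ↦ ?_) ⟨i, Finset.mem_univ _, ?_⟩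
  · rcases Int.units_eq_one_or (χ j) with h | h <;> simp [h, (hf j).le]
  · simp [hi, hf i]

end Subgroups

section CyclePoly

variable {Ω : Type*} [Fintype Ω]

theorem eval_cyclePoly (H : Subgroup (Perm Ω)) [Fintype H] (x : ℤ) :
    (cyclePoly H).eval x = ∑ g : H, x ^ cycleCount (g : Perm Ω) := by
  simp only [cyclePoly, eval_finsetSum, eval_pow, eval_X]
  congr!

theorem eval_card_cyclePoly (H : Subgroup (Perm Ω)) (β : Type*) [Fintype β] :
    (cyclePoly H).eval (Fintype.card β : ℤ) =
      Nat.card (orbitRel.Quotient H (Ω → β)) * Nat.card H := by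
  have burnside := sum_card_fixedBy_eq_card_orbits_mul_card_group H (Ω → β)
  have hfixed : ∀ g : H, Nat.card (fixedBy (Ω → β) g) = Nat.card β ^ cycleCount (g : Perm Ω) :=
    fun g ↦ card_fixedBy_arrow β (g : Perm Ω)
  simp only [Fintype.card_eq_nat_card, hfixed] at burnside
  rw [eval_cyclePoly, Fintype.card_eq_nat_card]
  exact_mod_cast burnside

variable [DecidableEq Ω]

theorem neg_one_pow_card_mul_eval_neg_cyclePoly (G : Subgroup (Perm Ω)) [Fintype G] (x : ℤ) :
    (-1) ^ Fintype.card Ω * (cyclePoly G).eval (-x) =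
      ∑ g : G, (sign (g : Perm Ω) : ℤ) * x ^ cycleCount (g : Perm Ω) := by
  rw [eval_cyclePoly, Finset.mul_sum]
  refine Fintype.sum_congr _ _ fun g ↦ ?_
  rw [sign_eq_neg_one_pow_card_add_cycleCount, neg_pow]
  push_cast
  ring

theorem neg_one_pow_card_mul_eval_neg_card_cyclePoly {G : Subgroup (Perm Ω)}
    (h : ∃ g ∈ G, sign g = -1) (β : Type*) [Fintype β] :
    (-1) ^ Fintype.card Ω * (cyclePoly G).eval (-(Fintype.card β : ℤ)) =
      Nat.card G * (Nat.card (orbitRel.Quotient (G ⊓ alternatingGroup Ω : Subgroup (Perm Ω))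
        (Ω → β)) - Nat.card (orbitRel.Quotient G (Ω → β)) : ℤ) := by
  rw [alternatingGroup_eq_sign_ker, neg_one_pow_card_mul_eval_neg_cyclePoly,
    sum_units_mul_eq_two_mul_sum_inf_ker_sub sign G (fun g ↦ _ ^ cycleCount g), ← eval_cyclePoly, ← eval_cyclePoly,
    eval_card_cyclePoly, eval_card_cyclePoly, card_eq_two_mul_card_inf_ker sign h]
  push_cast
  ring

end CyclePoly

theorem cyclePoly_neg_eval_of_odd {Ω : Type*} [Fintype Ω] [DecidableEq Ω]
    (G : Subgroup (Equiv.Perm Ω))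
    (h : ∃ g ∈ G, Equiv.Perm.sign g = -1)
    (N : Subgroup (Equiv.Perm Ω)) (hN : N = G ⊓ alternatingGroup Ω)
    (a : ℕ) (ha : 0 < a) :
    (0 ≤ (-1) ^ (Fintype.card Ω) * (cyclePoly G).eval (-(a : ℤ))) ∧
    ((-1) ^ (Fintype.card Ω) * (cyclePoly G).eval (-(a : ℤ)) < (cyclePoly G).eval (a : ℤ)) ∧
    ((-1) ^ (Fintype.card Ω) * (cyclePoly G).eval (-(a : ℤ)) = 0 ↔
      Nat.card (MulAction.orbitRel.Quotient G (Ω → Fin a)) =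
        Nat.card (MulAction.orbitRel.Quotient N (Ω → Fin a))) := by
  subst hN
  have key := neg_one_pow_card_mul_eval_neg_card_cyclePoly h (Fin a)
  rw [Fintype.card_fin] at key
  have hmono := card_orbitRel_quotient_le_of_le (Ω → Fin a) (inf_le_left : G ⊓ alternatingGroup Ω ≤ G)
  have hG_ne : (Nat.card G : ℤ) ≠ 0 := Nat.cast_ne_zero.2 Nat.card_pos.ne'
  obtain ⟨g, hg, hsign⟩ := h
  refine ⟨?_, ?_, ?_⟩
  · rw [key]
    exact mul_nonneg (Nat.cast_nonneg _) (sub_nonneg.2 (Nat.cast_le.2 hmono))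
  · rw [neg_one_pow_card_mul_eval_neg_cyclePoly, eval_cyclePoly]
    exact sum_units_mul_lt_sum _ (fun _ ↦ pow_pos (Nat.cast_pos.2 ha) _) ⟨⟨g, hg⟩, hsign⟩
  · rw [key, mul_eq_zero, or_iff_right hG_ne, sub_eq_zero, Nat.cast_inj, eq_comm]
end
end

section
/- (K_n, G) is a reciprocal pair (i.e., P_{K_n,G}(x) = (-1)^n F_G(-x)) if and only if G = S_n. -/
open Polynomial

open scoped Classical

noncomputable section

/-- The number of proper `a`-colourings of the graph `Γ` fixed by the permutation `g`;
this is the evaluation at `a` of the chromatic polynomial of the contracted graph `Γ/g`. -/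
def fixedProperColorings {Ω : Type*} [Fintype Ω] (Γ : SimpleGraph Ω)
    (g : Equiv.Perm Ω) (a : ℕ) : ℕ :=
  Nat.card {f : Ω → Fin a // (∀ v w, Γ.Adj v w → f v ≠ f w) ∧ ∀ v, f (g v) = f v}

/-- `p` is the orbital chromatic polynomial of the pair `(Γ, G)`: its value at every
natural number `a` is `∑_{g ∈ G} P_{Γ/g}(a)`, the number of proper `a`-colourings
fixed by `g`, summed over `g ∈ G`. -/
def IsOrbitalChromaticPoly {Ω : Type*} [Fintype Ω] (Γ : SimpleGraph Ω)
    (G : Subgroup (Equiv.Perm Ω)) (p : Polynomial ℤ) : Prop :=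
  ∀ a : ℕ, p.eval (a : ℤ) = ∑ g : G, (fixedProperColorings Γ (g : Equiv.Perm Ω) a : ℤ)

/-! For the complete graph only the identity fixes a proper colouring, so the orbital chromatic
polynomial of `(Kₙ, G)` is the falling factorial `x(x-1)⋯(x-n+1) = (-1)ⁿ F_{Sₙ}(-x)`, the
latter because Burnside's lemma for `Sₙ` acting on `a`-colourings gives
`F_{Sₙ}(a) = n! · multichoose a n = a(a+1)⋯(a+n-1)`. Hence the pair is reciprocal iff
`F_G = F_{Sₙ}`, and evaluating at `1` compares `|G|` with `n!`. -/

open Equiv MulAction Subgroup Finset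

theorem Polynomial.eq_of_eval_natCast_eq {R : Type*} [CommRing R] [IsDomain R] [CharZero R]
    {p q : R[X]} (h : ∀ n : ℕ, p.eval (n : R) = q.eval (n : R)) : p = q :=
  eq_of_infinite_eval_eq p q <| (Set.infinite_range_of_injective Nat.cast_injective).mono <| by
    rintro _ ⟨n, rfl⟩
    exact h n

theorem descPochhammer_eq_neg_one_pow_mul_ascPochhammer_comp_neg_X (R : Type*) [CommRing R]
    (n : ℕ) : descPochhammer R n = (-1) ^ n * (ascPochhammer R n).comp (-X) := by
  induction n with
  | zero => simp
  | succ n ih =>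
    rw [descPochhammer_succ_right, ascPochhammer_succ_right, ih, mul_comp, add_comp, X_comp,
      natCast_comp]
    ring

section FixedFunctions
attribute [local instance] arrowAction
variable {Ω β : Type*}

theorem apply_eq_of_mem_fixedBy_of_mem_zpowers {g h : Perm Ω} {f : Ω → β}
    (hf : f ∈ fixedBy (Ω → β) g) (hh : h ∈ zpowers g) (v : Ω) : f (h v) = f v := by
  have hinv : h⁻¹ ∈ stabilizer (Perm Ω) f := inv_mem (zpowers_le.2 hf hh)
  have hfix : f (h⁻¹⁻¹ • v) = f v := congrFun (mem_stabilizer_iff.1 hinv) v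
  rwa [inv_inv] at hfix

def fixedByEquivFunOnOrbits (g : Perm Ω) :
    fixedBy (Ω → β) g ≃ (orbitRel.Quotient (zpowers g) Ω → β) where
  toFun f := Quotient.lift f.1 <| by
    rintro _ b ⟨⟨h, hh⟩, rfl⟩
    exact apply_eq_of_mem_fixedBy_of_mem_zpowers f.2 hh b
  invFun F := ⟨F ∘ Quotient.mk _, funext fun v =>
    congrArg F (Quotient.sound ⟨⟨g⁻¹, inv_mem (mem_zpowers g)⟩, rfl⟩)⟩
  left_inv _ := rfl
  right_inv F := funext fun q => Quotient.inductionOn q fun _ => rfl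

variable [Fintype Ω]

theorem card_fixedBy_fun (g : Perm Ω) (m : ℕ) :
    Nat.card (fixedBy (Ω → Fin m) g) = m ^ cycleCount g := by
  rw [Nat.card_congr (fixedByEquivFunOnOrbits g), Nat.card_fun, Nat.card_eq_fintype_card,
    Fintype.card_fin, cycleCount]

def valueSym (f : Ω → β) : Sym β (Fintype.card Ω) :=
  ⟨univ.val.map f, by simp⟩

theorem valueSym_smul (σ : Perm Ω) (f : Ω → β) : valueSym (σ • f) = valueSym f := by
  refine Subtype.ext ?_
  change univ.val.map (f ∘ ⇑σ⁻¹) = univ.val.map f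
  rw [← Multiset.map_map, Multiset.map_univ_val_equiv]

theorem card_fiber_eq_count_valueSym (f : Ω → β) (b : β) :
    Fintype.card {v // f v = b} = (valueSym f : Multiset β).count b := by
  rw [Fintype.card_subtype, valueSym, Sym.coe_mk, Multiset.count_map, Finset.card, filter_val]
  simp_rw [eq_comm]

theorem exists_smul_eq_of_valueSym_eq {f₁ f₂ : Ω → β} (h : valueSym f₁ = valueSym f₂) :
    ∃ σ : Perm Ω, σ • f₂ = f₁ := by
  have hfiber (b : β) : {v // f₁ v = b} ≃ {v // f₂ v = b} :=
    Fintype.equivOfCardEq <| by rw [card_fiber_eq_count_valueSym, card_fiber_eq_count_valueSym, h]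
  refine ⟨(Equiv.ofFiberEquiv hfiber)⁻¹, funext fun v => ?_⟩
  change f₂ ((Equiv.ofFiberEquiv hfiber)⁻¹⁻¹ v) = f₁ v
  rw [inv_inv]
  exact Equiv.ofFiberEquiv_map hfiber v

theorem valueSym_surjective :
    Function.Surjective (valueSym : (Ω → β) → Sym β (Fintype.card Ω)) := by
  intro s
  have hlen : Fintype.card Ω = (s : Multiset β).toList.length := by simp
  let e : Ω ≃ Fin _ := (Fintype.equivFin Ω).trans (finCongr hlen)
  refine ⟨(s : Multiset β).toList.get ∘ e, Subtype.ext ?_⟩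
  change univ.val.map ((s : Multiset β).toList.get ∘ e) = s
  rw [← Multiset.map_map, Multiset.map_univ_val_equiv e, Fin.univ_val_map, List.ofFn_get,
    Multiset.coe_toList]

def orbitsOfFunEquivSym : orbitRel.Quotient (Perm Ω) (Ω → β) ≃ Sym β (Fintype.card Ω) :=
  Equiv.ofBijective (Quotient.lift valueSym fun _ _ ⟨σ, hσ⟩ => hσ ▸ valueSym_smul σ _)
    ⟨fun q₁ q₂ => Quotient.inductionOn₂ q₁ q₂ fun _ _ h =>
      Quotient.sound (exists_smul_eq_of_valueSym_eq h),
    fun s => let ⟨f, hf⟩ := valueSym_surjective s; ⟨⟦f⟧, hf⟩⟩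

theorem sum_pow_cycleCount (m : ℕ) :
    ∑ g : Perm Ω, m ^ cycleCount g = m.ascFactorial (Fintype.card Ω) := calc
  ∑ g : Perm Ω, m ^ cycleCount g = ∑ g : Perm Ω, Fintype.card (fixedBy (Ω → Fin m) g) := by
    simp only [← Nat.card_eq_fintype_card, card_fixedBy_fun]
  _ = Fintype.card (orbitRel.Quotient (Perm Ω) (Ω → Fin m)) * Fintype.card (Perm Ω) :=
    sum_card_fixedBy_eq_card_orbits_mul_card_group _ _
  _ = m.multichoose (Fintype.card Ω) * (Fintype.card Ω).factorial := by
    rw [Fintype.card_congr orbitsOfFunEquivSym, Sym.card_sym_eq_multichoose, Fintype.card_fin,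
      Fintype.card_perm]
  _ = m.ascFactorial (Fintype.card Ω) := by
    rw [Nat.multichoose_eq, Nat.ascFactorial_eq_factorial_mul_choose', mul_comm]

end FixedFunctions

section CyclePoly
variable {Ω : Type*} [Fintype Ω]

theorem cyclePoly_top :
    cyclePoly (⊤ : Subgroup (Perm Ω)) = ascPochhammer ℤ (Fintype.card Ω) := by
  refine Polynomial.eq_of_eval_natCast_eq fun m => ?_
  rw [← ascPochhammer_eval_cast, ascPochhammer_nat_eq_ascFactorial, ← sum_pow_cycleCount,
    cyclePoly, eval_finsetSum, Nat.cast_sum]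
  exact Fintype.sum_equiv (subtypeUnivEquiv mem_top) _ _ fun g => by simp

theorem cyclePoly_eval_one (G : Subgroup (Perm Ω)) : (cyclePoly G).eval 1 = Nat.card G := by
  simp [cyclePoly, eval_finsetSum, Nat.card_eq_fintype_card]

theorem cyclePoly_eq_cyclePoly_top_iff {G : Subgroup (Perm Ω)} :
    cyclePoly G = cyclePoly (⊤ : Subgroup (Perm Ω)) ↔ G = ⊤ := by
  refine ⟨fun h => eq_top_of_card_eq G ?_, fun h => h ▸ rfl⟩
  have hcard := congrArg (eval 1) h
  rw [cyclePoly_eval_one, cyclePoly_eval_one, card_top] at hcard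
  exact_mod_cast hcard

end CyclePoly

section Colorings
variable {Ω : Type*} [Fintype Ω]

theorem fixedProperColorings_eq_zero_of_adj {Γ : SimpleGraph Ω} {g : Perm Ω} {v : Ω}
    (hv : Γ.Adj (g v) v) (a : ℕ) : fixedProperColorings Γ g a = 0 :=
  Nat.card_eq_zero.2 <| .inl ⟨fun f => f.2.1 _ _ hv (f.2.2 v)⟩

theorem fixedProperColorings_top_one (a : ℕ) :
    fixedProperColorings (⊤ : SimpleGraph Ω) 1 a = a.descFactorial (Fintype.card Ω) := by
  have hproper (f : Ω → Fin a) :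
      ((∀ v w, (⊤ : SimpleGraph Ω).Adj v w → f v ≠ f w) ∧ ∀ v, f ((1 : Perm Ω) v) = f v) ↔
        Function.Injective f := by
    simp only [SimpleGraph.top_adj, Perm.coe_one, id_eq, implies_true, and_true]
    exact Function.injective_iff_pairwise_ne.symm
  rw [fixedProperColorings, Nat.card_congr ((Equiv.subtypeEquivRight hproper).trans
    (Equiv.subtypeInjectiveEquivEmbedding Ω (Fin a))), Nat.card_eq_fintype_card,
    Fintype.card_embedding_eq, Fintype.card_fin]

theorem IsOrbitalChromaticPoly.top_eq_descPochhammer {G : Subgroup (Perm Ω)} {p : ℤ[X]}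
    (hp : IsOrbitalChromaticPoly ⊤ G p) : p = descPochhammer ℤ (Fintype.card Ω) := by
  refine Polynomial.eq_of_eval_natCast_eq fun a => ?_
  rw [hp a, descPochhammer_eval_eq_descFactorial, Fintype.sum_eq_single 1 fun g hg => ?_,
    OneMemClass.coe_one, fixedProperColorings_top_one]
  obtain ⟨v, hv⟩ : ∃ v, (g : Perm Ω) v ≠ v := by
    by_contra! h
    exact hg (Subtype.ext (Equiv.ext h))
  rw [fixedProperColorings_eq_zero_of_adj ((SimpleGraph.top_adj _ _).2 hv), Nat.cast_zero]

end Colorings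

theorem reciprocal_completeGraph_iff_general {Ω : Type*} [Fintype Ω]
    (G : Subgroup (Equiv.Perm Ω)) (p : Polynomial ℤ)
    (hp : IsOrbitalChromaticPoly (⊤ : SimpleGraph Ω) G p) :
    (p = (-1) ^ (Fintype.card Ω) * (cyclePoly G).comp (-X)) ↔ G = ⊤ := by
  rw [IsOrbitalChromaticPoly.top_eq_descPochhammer hp,
    descPochhammer_eq_neg_one_pow_mul_ascPochhammer_comp_neg_X, ← cyclePoly_top,
    mul_right_inj' (pow_ne_zero _ (neg_ne_zero.2 one_ne_zero)),
    (Function.Involutive.injective comp_neg_X_comp_neg_X).eq_iff, eq_comm,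
    cyclePoly_eq_cyclePoly_top_iff]

theorem reciprocal_completeGraph_iff {Ω : Type*} [Fintype Ω] [DecidableEq Ω]
    (G : Subgroup (Equiv.Perm Ω)) (p : Polynomial ℤ)
    (hp : IsOrbitalChromaticPoly (⊤ : SimpleGraph Ω) G p) :
    (p = (-1) ^ (Fintype.card Ω) * (cyclePoly G).comp (-X)) ↔ G = ⊤ :=
  reciprocal_completeGraph_iff_general G p hp
end
end

section
/- Suppose (Γ,G) is a reciprocal pair where Γ is a graph on n vertices and G ≤ Aut(Γ). Then the number of edges of Γ equals t(G) + t⁰(G), where t(G) is the number of transpositions in G and t⁰(G) is the number of transpositions (i,j) in G such that {i,j} is a non-edge of Γ. -/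
open Polynomial

open scoped Classical

noncomputable section

/-!
Compare the coefficients of `x ^ (n - 1)`. By inclusion–exclusion over edge sets `S ⊆ E(Γ)`,
the `g`-fixed proper colourings are counted by `∑_S (-1)^|S| x ^ k(g, S)`, where `k(g, S)` is the
number of classes of the equivalence relation generated by the cycles of `g` and the edges in `S`.
An equivalence relation on `n` points has `n - 1` classes exactly when it identifies a single
pair, so `k(g, S) = n - 1` only for `g = 1, |S| = 1`, or for `g` a transposition `(i j)` and
`S ⊆ {ij}`. Hence the coefficient of `x ^ (n - 1)` in `P_{Γ,G}` is `-|E(Γ)| + t⁰(G)`. Likewise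
`c(g) = n - 1` exactly for the transpositions, so in `(-1)^n F_G(-x)` it is `-t(G)`.
-/

open Finset MulAction

section PairSetoid

variable {α : Type*}

def pairSetoid (i j : α) : Setoid α where
  r v w := v = w ∨ s(v, w) = s(i, j)
  iseqv := by
    refine ⟨fun _ ↦ .inl rfl, ?_, ?_⟩
    · rintro v w (h | h)
      exacts [.inl h.symm, .inr (Sym2.eq_swap.trans h)]
    · rintro u v w (rfl | huv) (rfl | hvw)
      · exact .inl rfl
      · exact .inr hvw
      · exact .inr huv
      · rw [← hvw, Sym2.eq_iff] at huv
        rcases huv with ⟨rfl, rfl⟩ | ⟨rfl, -⟩ <;> exact .inl rfl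

theorem pairSetoid_le_iff {i j : α} {s : Setoid α} : pairSetoid i j ≤ s ↔ s i j := by
  refine ⟨fun h ↦ h (.inr rfl), fun hij v w hvw ↦ ?_⟩
  rcases hvw with rfl | hvw
  · exact s.refl' v
  · rcases Sym2.eq_iff.mp hvw with ⟨rfl, rfl⟩ | ⟨rfl, rfl⟩
    exacts [hij, s.symm' hij]

theorem card_quotient_pairSetoid [Finite α] {i j : α} (hij : i ≠ j) :
    Nat.card (Quotient (pairSetoid i j)) = Nat.card α - 1 := by
  have e : Quotient (pairSetoid i j) ≃ {v : α // v ≠ j} :=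
    { toFun := Quotient.lift (fun v ↦ if hv : v = j then ⟨i, hij⟩ else ⟨v, hv⟩) <| by
        rintro v w (rfl | hvw)
        · rfl
        · rcases Sym2.eq_iff.mp hvw with ⟨rfl, rfl⟩ | ⟨rfl, rfl⟩ <;> simp [hij]
      invFun v := ⟦v.1⟧
      left_inv := Quotient.ind fun v ↦ by
        by_cases hv : v = j
        · subst hv
          simpa using (Quotient.sound (s := pairSetoid i v) (Or.inr Sym2.eq_swap)).symm
        · simp [hv]
      right_inv := fun ⟨v, hv⟩ ↦ by simp [hv] }
  have := Fintype.ofFinite α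
  rw [Nat.card_congr e, Nat.card_eq_fintype_card, Fintype.card_subtype_compl,
    Fintype.card_subtype_eq, Nat.card_eq_fintype_card]

end PairSetoid

namespace Setoid

variable {α : Type*} [Finite α]

theorem eq_of_le_of_card_quotient_le {s t : Setoid α} (h : s ≤ t)
    (hc : Nat.card (Quotient s) ≤ Nat.card (Quotient t)) : s = t := by
  have hsurj : Function.Surjective (map_of_le h) := Quotient.ind fun v ↦ ⟨⟦v⟧, rfl⟩
  have hinj := (hsurj.bijective_of_nat_card_le hc).1
  exact le_antisymm h fun v w hvw ↦ Quotient.exact (hinj (Quotient.sound hvw))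

theorem exists_ne_rel_of_card_quotient_lt {s : Setoid α}
    (h : Nat.card (Quotient s) < Nat.card α) : ∃ i j, i ≠ j ∧ s i j := by
  by_contra! hs
  have hinj : Function.Injective (Quotient.mk s) := fun i j hij ↦
    by_contra fun hne ↦ hs i j hne (Quotient.exact hij)
  exact h.not_ge (Nat.card_le_card_of_injective _ hinj)

theorem card_quotient_eq_card_sub_one_iff [Nonempty α] {s : Setoid α} :
    Nat.card (Quotient s) = Nat.card α - 1 ↔ ∃ i j, i ≠ j ∧ s = pairSetoid i j := by
  constructor
  · intro hs
    obtain ⟨i, j, hij, hs_ij⟩ :=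
      exists_ne_rel_of_card_quotient_lt (by rw [hs]; exact Nat.sub_lt Nat.card_pos one_pos)
    refine ⟨i, j, hij, (eq_of_le_of_card_quotient_le (pairSetoid_le_iff.mpr hs_ij) ?_).symm⟩
    rw [hs, card_quotient_pairSetoid hij]
  · rintro ⟨i, j, hij, rfl⟩
    exact card_quotient_pairSetoid hij

theorem card_subtype_le_ker {β : Type*} (s : Setoid α) :
    Nat.card {f : α → β // s ≤ ker f} = Nat.card β ^ Nat.card (Quotient s) := by
  rw [Nat.card_congr (liftEquiv s), Nat.card_fun]

end Setoid

namespace Equiv.Perm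

variable {α : Type*}

theorem orbitRel_zpowers_le_iff {g : Perm α} {t : Setoid α} :
    orbitRel (Subgroup.zpowers g) α ≤ t ↔ ∀ v, t (g v) v := by
  refine ⟨fun h v ↦ h ⟨⟨g, Subgroup.mem_zpowers g⟩, rfl⟩, ?_⟩
  rintro hg v w ⟨⟨_, k, rfl⟩, rfl⟩
  change t ((g ^ k) w) w
  induction k using Int.induction_on with
  | zero => exact t.refl' w
  | succ k ih =>
    rw [add_comm, zpow_one_add, mul_apply]
    exact t.trans' (hg _) ih
  | pred k ih =>
    rw [sub_eq_neg_add, zpow_add, zpow_neg_one, mul_apply]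
    have hstep := hg (g⁻¹ ((g ^ (-(k : ℤ))) w))
    rw [← mul_apply, mul_inv_cancel, one_apply] at hstep
    exact t.trans' (t.symm' hstep) ih

variable [DecidableEq α]

theorem forall_pairSetoid_apply_self_iff {g : Perm α} {i j : α} (hij : i ≠ j) :
    (∀ v, pairSetoid i j (g v) v) ↔ g = 1 ∨ g = swap i j := by
  constructor
  · intro hg
    have moved : ∀ v, g v ≠ v → (v = i ∧ g v = j) ∨ (v = j ∧ g v = i) := fun v hv ↦ by
      rcases hg v with h | h
      · exact absurd h hv
      · rcases Sym2.eq_iff.mp h with ⟨h₁, h₂⟩ | ⟨h₁, h₂⟩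
        exacts [.inr ⟨h₂, h₁⟩, .inl ⟨h₂, h₁⟩]
    by_cases hgi : g i = i
    · refine .inl (Equiv.ext fun v ↦ by_contra fun hv ↦ ?_)
      rcases moved v hv with ⟨rfl, -⟩ | ⟨rfl, hgj⟩
      exacts [hv hgi, hij (g.injective (hgi.trans hgj.symm))]
    · have hgi : g i = j := ((moved i hgi).resolve_right fun h ↦ hij h.1).2
      have hgj : g j = i := by
        have hj : g j ≠ j := fun h ↦ hij (g.injective (hgi.trans h.symm))
        exact ((moved j hj).resolve_left fun h ↦ hij h.1.symm).2
      refine .inr (Equiv.ext fun v ↦ ?_)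
      by_cases hvi : v = i
      · simp [hvi, hgi]
      by_cases hvj : v = j
      · simp [hvj, hgj]
      rw [swap_apply_of_ne_of_ne hvi hvj]
      by_contra hv
      rcases moved v hv with ⟨h, -⟩ | ⟨h, -⟩
      exacts [hvi h, hvj h]
  · rintro (rfl | rfl) v
    · exact .inl rfl
    · by_cases hv : swap i j v = v
      · exact .inl hv
      · obtain ⟨-, rfl | rfl⟩ := swap_apply_ne_self_iff.mp hv
        · exact .inr (by simp [Sym2.eq_swap])
        · exact .inr (by simp)

end Equiv.Perm

theorem Equiv.swap_eq_swap_iff {α : Type*} [DecidableEq α] {a b c d : α} (hab : a ≠ b) :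
    swap a b = swap c d ↔ s(a, b) = s(c, d) := by
  refine ⟨fun h ↦ ?_, fun h ↦ ?_⟩
  · have hmoved : swap c d a ≠ a := by rw [← h, swap_apply_left]; exact hab.symm
    have hb := Equiv.congr_fun h a
    obtain ⟨-, rfl | rfl⟩ := swap_apply_ne_self_iff.mp hmoved
    · rw [swap_apply_left, swap_apply_left] at hb
      rw [hb]
    · rw [swap_apply_left, swap_apply_right] at hb
      rw [hb, Sym2.eq_swap]
  · rcases Sym2.eq_iff.mp h with ⟨rfl, rfl⟩ | ⟨rfl, rfl⟩
    exacts [rfl, swap_comm _ _]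

section MergeSetoid

open Equiv

variable {α : Type*}

/-- Its classes are the vertices left after contracting the edges in `S` and the cycles of `g`. -/
def mergeSetoid (g : Perm α) (S : Finset (Sym2 α)) : Setoid α :=
  orbitRel (Subgroup.zpowers g) α ⊔ Relation.EqvGen.setoid fun v w ↦ s(v, w) ∈ S

variable {g : Perm α} {S : Finset (Sym2 α)}

theorem mergeSetoid_le_iff {t : Setoid α} :
    mergeSetoid g S ≤ t ↔ (∀ v, t (g v) v) ∧ ∀ v w, s(v, w) ∈ S → t v w := by
  rw [mergeSetoid, sup_le_iff, Perm.orbitRel_zpowers_le_iff]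
  exact and_congr_right' ⟨fun h v w hvw ↦ h (Relation.EqvGen.rel _ _ hvw), Setoid.eqvGen_le⟩

theorem mergeSetoid_empty (g : Perm α) : mergeSetoid g ∅ = orbitRel (Subgroup.zpowers g) α :=
  sup_eq_left.mpr (Setoid.eqvGen_le fun _ _ h ↦ absurd h (notMem_empty _))

theorem mergeSetoid_le_ker_iff {β : Type*} {f : α → β} :
    mergeSetoid g S ≤ Setoid.ker f ↔ (∀ v, f (g v) = f v) ∧ ∀ e ∈ S, (e.map f).IsDiag := by
  simp only [mergeSetoid_le_iff, Setoid.ker_def, Sym2.forall, Sym2.map_mk,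
    Sym2.mk_isDiag_iff]

variable [DecidableEq α]

theorem mergeSetoid_eq_pairSetoid_iff {i j : α} (hij : i ≠ j) (hS : ∀ e ∈ S, ¬e.IsDiag) :
    mergeSetoid g S = pairSetoid i j ↔
      (g = 1 ∧ S = {s(i, j)}) ∨ (g = swap i j ∧ S ⊆ {s(i, j)}) := by
  have hS_le : (∀ v w, s(v, w) ∈ S → pairSetoid i j v w) ↔ S ⊆ {s(i, j)} := by
    refine ⟨fun h e he ↦ ?_, fun h v w hvw ↦ .inr (mem_singleton.mp (h hvw))⟩
    induction e using Sym2.ind with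
    | h v w =>
      rcases h v w he with rfl | hvw
      exacts [absurd (Sym2.mk_isDiag_iff.mpr rfl) (hS _ he), mem_singleton.mpr hvw]
  rw [le_antisymm_iff, mergeSetoid_le_iff, pairSetoid_le_iff,
    Perm.forall_pairSetoid_apply_self_iff hij, hS_le]
  constructor
  · rintro ⟨⟨rfl | rfl, hsub⟩, hrel⟩
    · refine .inl ⟨rfl, (subset_singleton_iff.mp hsub).resolve_left ?_⟩
      rintro rfl
      rw [mergeSetoid_empty] at hrel
      exact hij (Perm.orbitRel_zpowers_le_iff.mpr (fun _ ↦ rfl) hrel : (⊥ : Setoid α) i j)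
    · exact .inr ⟨rfl, hsub⟩
  · rintro (⟨rfl, rfl⟩ | ⟨rfl, hsub⟩)
    · exact ⟨⟨.inl rfl, subset_rfl⟩, (mergeSetoid_le_iff.mp le_rfl).2 i j (mem_singleton_self _)⟩
    · refine ⟨⟨.inr rfl, hsub⟩, Setoid.symm' _ ?_⟩
      simpa using (mergeSetoid_le_iff.mp (le_refl (mergeSetoid (swap i j) S))).1 i

theorem card_quotient_mergeSetoid_eq_card_sub_one_iff [Finite α] [Nonempty α]
    (hS : ∀ e ∈ S, ¬e.IsDiag) :
    Nat.card (Quotient (mergeSetoid g S)) = Nat.card α - 1 ↔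
      ∃ i j, i ≠ j ∧ ((g = 1 ∧ S = {s(i, j)}) ∨ (g = swap i j ∧ S ⊆ {s(i, j)})) := by
  rw [Setoid.card_quotient_eq_card_sub_one_iff]
  exact exists₂_congr fun i j ↦ and_congr_right fun hij ↦ mergeSetoid_eq_pairSetoid_iff hij hS

end MergeSetoid

theorem cycleCount_eq_card_sub_one_iff {α : Type*} [Fintype α] [DecidableEq α] [Nonempty α]
    (g : Equiv.Perm α) : cycleCount g = Fintype.card α - 1 ↔ g.IsSwap := by
  rw [cycleCount, ← Nat.card_eq_fintype_card]
  change Nat.card (Quotient _) = _ ↔ _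
  rw [← mergeSetoid_empty, card_quotient_mergeSetoid_eq_card_sub_one_iff (by simp)]
  simp [Equiv.Perm.IsSwap]

theorem coeff_neg_one_pow_mul_cyclePoly_comp_neg_X {Ω : Type*} [Fintype Ω] [DecidableEq Ω]
    [Nonempty Ω] (G : Subgroup (Equiv.Perm Ω)) :
    ((-1) ^ Fintype.card Ω * (cyclePoly G).comp (-X)).coeff (Fintype.card Ω - 1) =
      -Nat.card {g : G // (g : Equiv.Perm Ω).IsSwap} := by
  obtain ⟨m, hm⟩ : ∃ m, Fintype.card Ω = m + 1 :=
    ⟨_, (Nat.succ_pred_eq_of_pos Fintype.card_pos).symm⟩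
  have hterm (g : G) : ((-X) ^ cycleCount (g : Equiv.Perm Ω) : ℤ[X]).coeff m =
      if (g : Equiv.Perm Ω).IsSwap then (-1) ^ m else 0 := by
    rw [← cycleCount_eq_card_sub_one_iff, hm, Nat.add_sub_cancel, neg_pow, ← C_1, ← C_neg,
      ← C_pow, coeff_C_mul_X_pow]
    by_cases h : cycleCount (g : Equiv.Perm Ω) = m
    · rw [if_pos h.symm, if_pos h, h]
    · rw [if_neg (Ne.symm h), if_neg h]
  have hsign : ((-1) ^ (m + 1) : ℤ[X]) = C ((-1) ^ (m + 1)) := by rw [C_pow, C_neg, C_1]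
  rw [hm, Nat.add_sub_cancel, hsign, coeff_C_mul, cyclePoly, Polynomial.sum_comp, finsetSum_coeff]
  have hsign' : (-1 : ℤ) ^ (m + 1) * (-1) ^ m = -1 := by
    rw [← pow_add]
    exact Odd.neg_one_pow ⟨m, by ring⟩
  simp only [X_pow_comp, hterm, ← sum_filter, sum_const, nsmul_eq_mul, ← Fintype.card_subtype,
    ← Nat.card_eq_fintype_card]
  rw [mul_left_comm, hsign', mul_neg_one]

namespace SimpleGraph

open Equiv

variable {Ω : Type*} [Fintype Ω] (Γ : SimpleGraph Ω) [DecidableRel Γ.Adj]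

/-- Whitney's expansion of the chromatic polynomial of the contraction `Γ/g`. -/
def fixedChromaticPoly (g : Perm Ω) : ℤ[X] :=
  ∑ S ∈ Γ.edgeFinset.powerset, C ((-1) ^ #S) * X ^ Nat.card (Quotient (mergeSetoid g S))

theorem eval_fixedChromaticPoly (g : Perm Ω) (a : ℕ) :
    (Γ.fixedChromaticPoly g).eval (a : ℤ) = fixedProperColorings Γ g a := by
  let Fixed := {f : Ω → Fin a // ∀ v, f (g v) = f v}
  let mono (e : Sym2 Ω) : Finset Fixed := {f | (e.map f.1).IsDiag}
  have card_inf_mono (S : Finset (Sym2 Ω)) :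
      #(S.inf mono) = a ^ Nat.card (Quotient (mergeSetoid g S)) := by
    calc #(S.inf mono)
        = Nat.card {f : Fixed // ∀ e ∈ S, (e.map f.1).IsDiag} := by
          rw [← Nat.card_eq_finsetCard]
          exact Nat.card_congr (subtypeEquivRight fun f ↦ by simp [mono, mem_inf])
      _ = Nat.card {f : Ω → Fin a // mergeSetoid g S ≤ Setoid.ker f} :=
          Nat.card_congr ((subtypeSubtypeEquivSubtypeInter _ _).trans
            (subtypeEquivRight fun f ↦ mergeSetoid_le_ker_iff.symm))
      _ = a ^ Nat.card (Quotient (mergeSetoid g S)) := by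
          rw [Setoid.card_subtype_le_ker, Nat.card_fin]
  have card_proper : fixedProperColorings Γ g a = #(Γ.edgeFinset.inf fun e ↦ (mono e)ᶜ) := by
    rw [← Nat.card_eq_finsetCard, fixedProperColorings]
    refine Nat.card_congr ((subtypeEquivRight fun f ↦ and_comm).trans
      ((subtypeSubtypeEquivSubtypeInter _ _).symm.trans (subtypeEquivRight fun f ↦ ?_)))
    simp [mono, mem_inf, Sym2.forall, Sym2.map_mk]
  rw [card_proper, inclusion_exclusion_card_inf_compl, fixedChromaticPoly, eval_finsetSum]
  simp [card_inf_mono]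

theorem coeff_fixedChromaticPoly (g : Perm Ω) (m : ℕ) :
    (Γ.fixedChromaticPoly g).coeff m =
      ∑ S ∈ Γ.edgeFinset.powerset with Nat.card (Quotient (mergeSetoid g S)) = m, (-1) ^ #S := by
  rw [fixedChromaticPoly, finsetSum_coeff, sum_filter]
  exact sum_congr rfl fun S _ ↦ by rw [coeff_C_mul_X_pow]; exact if_congr eq_comm rfl rfl

theorem not_isDiag_of_mem_powerset_edgeFinset {S : Finset (Sym2 Ω)}
    (hS : S ∈ Γ.edgeFinset.powerset) : ∀ e ∈ S, ¬e.IsDiag := fun _ he ↦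
  Γ.not_isDiag_of_mem_edgeSet (mem_edgeFinset.mp (mem_powerset.mp hS he))

variable [DecidableEq Ω]

theorem _root_.IsOrbitalChromaticPoly.eq_sum_fixedChromaticPoly {G : Subgroup (Perm Ω)}
    {p : ℤ[X]} (hp : IsOrbitalChromaticPoly Γ G p) : p = ∑ g : G, Γ.fixedChromaticPoly g := by
  refine eq_of_infinite_eval_eq _ _ ((Set.infinite_range_of_injective Nat.cast_injective).mono ?_)
  rintro _ ⟨a, rfl⟩
  simp only [Set.mem_ofPred_eq, hp a, eval_finsetSum, eval_fixedChromaticPoly]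
  -- the two sums over `G` are taken with different (classical vs. given) `Fintype` instances
  convert rfl

variable [Nonempty Ω]

theorem coeff_fixedChromaticPoly_one :
    (Γ.fixedChromaticPoly 1).coeff (Fintype.card Ω - 1) = -#Γ.edgeFinset := by
  have hfilter : {S ∈ Γ.edgeFinset.powerset |
      Nat.card (Quotient (mergeSetoid 1 S)) = Fintype.card Ω - 1} = Γ.edgeFinset.powersetCard 1 := by
    rw [powersetCard_eq_filter]
    refine filter_congr fun S hS ↦ ?_
    rw [← Nat.card_eq_fintype_card,
      card_quotient_mergeSetoid_eq_card_sub_one_iff (Γ.not_isDiag_of_mem_powerset_edgeFinset hS)]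
    constructor
    · rintro ⟨i, j, hij, ⟨-, rfl⟩ | ⟨h, -⟩⟩
      exacts [card_singleton _, absurd (swap_eq_one_iff.mp h.symm) hij]
    · intro h
      obtain ⟨e, rfl⟩ := card_eq_one.mp h
      have he := Γ.not_isDiag_of_mem_powerset_edgeFinset hS e (mem_singleton_self e)
      induction e using Sym2.ind with
      | h i j => exact ⟨i, j, fun hij ↦ he (Sym2.mk_isDiag_iff.mpr hij), .inl ⟨rfl, rfl⟩⟩
  rw [coeff_fixedChromaticPoly, hfilter, sum_congr rfl fun S hS ↦ by rw [(mem_powersetCard.mp hS).2],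
    sum_const, card_powersetCard, Nat.choose_one_right]
  simp

theorem coeff_fixedChromaticPoly_swap {i j : Ω} (hij : i ≠ j) :
    (Γ.fixedChromaticPoly (swap i j)).coeff (Fintype.card Ω - 1) = if Γ.Adj i j then 0 else 1 := by
  have hfilter : {S ∈ Γ.edgeFinset.powerset |
      Nat.card (Quotient (mergeSetoid (swap i j) S)) = Fintype.card Ω - 1} =
        (Γ.edgeFinset ∩ {s(i, j)}).powerset := by
    ext S
    simp only [mem_filter, mem_powerset, subset_inter_iff]
    refine and_congr_right fun hS ↦ ?_
    rw [← mem_powerset] at hS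
    rw [← Nat.card_eq_fintype_card,
      card_quotient_mergeSetoid_eq_card_sub_one_iff (Γ.not_isDiag_of_mem_powerset_edgeFinset hS)]
    constructor
    · rintro ⟨i', j', -, ⟨h, -⟩ | ⟨h, hsub⟩⟩
      · exact absurd (swap_eq_one_iff.mp h) hij
      · rwa [(swap_eq_swap_iff hij).mp h]
    · exact fun hsub ↦ ⟨i, j, hij, .inr ⟨rfl, hsub⟩⟩
  rw [coeff_fixedChromaticPoly, hfilter, sum_powerset_neg_one_pow_card]
  by_cases h : Γ.Adj i j
  · simp [inter_singleton_of_mem (Γ.mem_edgeFinset.mpr (Γ.mem_edgeSet.mpr h)), h]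
  · simp [inter_singleton_of_notMem (mt Γ.mem_edgeFinset.mp (mt Γ.mem_edgeSet.mp h)), h]

theorem coeff_fixedChromaticPoly_of_ne_one_of_not_isSwap {g : Perm Ω} (h₁ : g ≠ 1)
    (hswap : ¬g.IsSwap) : (Γ.fixedChromaticPoly g).coeff (Fintype.card Ω - 1) = 0 := by
  rw [coeff_fixedChromaticPoly, sum_eq_zero]
  intro S hS
  obtain ⟨hS, hcard⟩ := mem_filter.mp hS
  rw [← Nat.card_eq_fintype_card,
    card_quotient_mergeSetoid_eq_card_sub_one_iff (Γ.not_isDiag_of_mem_powerset_edgeFinset hS)]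
    at hcard
  obtain ⟨i, j, hij, ⟨h, -⟩ | ⟨h, -⟩⟩ := hcard
  exacts [absurd h h₁, absurd ⟨i, j, hij, h⟩ hswap]

theorem coeff_fixedChromaticPoly_card_sub_one (g : Perm Ω) :
    (Γ.fixedChromaticPoly g).coeff (Fintype.card Ω - 1) =
      (if g = 1 then -(#Γ.edgeFinset : ℤ) else 0) +
        if ∃ i j, i ≠ j ∧ g = swap i j ∧ ¬Γ.Adj i j then 1 else 0 := by
  by_cases h₁ : g = 1
  · subst h₁
    rw [coeff_fixedChromaticPoly_one, if_pos rfl, if_neg, add_zero]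
    rintro ⟨i, j, hij, h, -⟩
    exact hij (swap_eq_one_iff.mp h.symm)
  rw [if_neg h₁, zero_add]
  by_cases hswap : g.IsSwap
  · obtain ⟨i, j, hij, rfl⟩ := hswap
    have hnonedge : (∃ i' j', i' ≠ j' ∧ swap i j = swap i' j' ∧ ¬Γ.Adj i' j') ↔ ¬Γ.Adj i j := by
      refine ⟨fun ⟨i', j', _, h, hadj⟩ ↦ ?_, fun h ↦ ⟨i, j, hij, rfl, h⟩⟩
      rwa [← mem_edgeSet, ← (swap_eq_swap_iff hij).mp h, mem_edgeSet] at hadj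
    rw [coeff_fixedChromaticPoly_swap Γ hij, if_congr hnonedge rfl rfl, ite_not]
  · rw [coeff_fixedChromaticPoly_of_ne_one_of_not_isSwap Γ h₁ hswap, if_neg]
    rintro ⟨i, j, hij, h, -⟩
    exact hswap ⟨i, j, hij, h⟩

theorem coeff_sum_fixedChromaticPoly (G : Subgroup (Perm Ω)) :
    (∑ g : G, Γ.fixedChromaticPoly g).coeff (Fintype.card Ω - 1) =
      -#Γ.edgeFinset +
        Nat.card {g : G // ∃ i j, i ≠ j ∧ (g : Perm Ω) = swap i j ∧ ¬Γ.Adj i j} := by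
  simp only [finsetSum_coeff, coeff_fixedChromaticPoly_card_sub_one, sum_add_distrib,
    OneMemClass.coe_eq_one]
  simp [Nat.card_eq_fintype_card, Fintype.card_subtype]

end SimpleGraph

theorem edges_eq_transpositions_of_reciprocal_general {Ω : Type*} [Fintype Ω] [DecidableEq Ω]
    (Γ : SimpleGraph Ω) [DecidableRel Γ.Adj] (G : Subgroup (Equiv.Perm Ω))
    (p : Polynomial ℤ) (hp : IsOrbitalChromaticPoly Γ G p)
    (hrec : p = (-1) ^ (Fintype.card Ω) * (cyclePoly G).comp (-X)) :
    Γ.edgeFinset.card =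
      Nat.card {g : G // (g : Equiv.Perm Ω).IsSwap} +
      Nat.card {g : G // ∃ i j : Ω, i ≠ j ∧
        (g : Equiv.Perm Ω) = Equiv.swap i j ∧ ¬ Γ.Adj i j} := by
  rcases isEmpty_or_nonempty Ω with hΩ | hΩ
  · simp [Equiv.Perm.IsSwap, Finset.eq_empty_of_isEmpty Γ.edgeFinset]
  have hcoeff := congrArg (coeff · (Fintype.card Ω - 1))
    (hp.eq_sum_fixedChromaticPoly.symm.trans hrec)
  simp only [Γ.coeff_sum_fixedChromaticPoly, coeff_neg_one_pow_mul_cyclePoly_comp_neg_X] at hcoeff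
  omega

theorem edges_eq_transpositions_of_reciprocal {Ω : Type*} [Fintype Ω] [DecidableEq Ω]
    (Γ : SimpleGraph Ω) [DecidableRel Γ.Adj] (G : Subgroup (Equiv.Perm Ω))
    (hGaut : ∀ g ∈ G, ∀ v w : Ω, Γ.Adj v w → Γ.Adj (g v) (g w))
    (p : Polynomial ℤ) (hp : IsOrbitalChromaticPoly Γ G p)
    (hrec : p = (-1) ^ (Fintype.card Ω) * (cyclePoly G).comp (-X)) :
    Γ.edgeFinset.card =
      Nat.card {g : G // (g : Equiv.Perm Ω).IsSwap} +
      Nat.card {g : G // ∃ i j : Ω, i ≠ j ∧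
        (g : Equiv.Perm Ω) = Equiv.swap i j ∧ ¬ Γ.Adj i j} :=
  edges_eq_transpositions_of_reciprocal_general Γ G p hp hrec
end
end
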